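/- arXiv:2107.07469 — 3 statements merged into one kernel-verified Lean document; each statement's English description precedes it below -/
import Mathlib

section
/- The operator A admits the expansion A = γ•(1₂⊗1₂⊗1₂) + δ•(σ⊗σ⊗1₂) + δ•(σ⊗1₂⊗σ) + η•(1₂⊗σ⊗σ), where γ = K₀²*R₀ + K₃²*R₃ = (1/4)*(exp((J+2)*β) + exp(J*β) + 2*exp β), δ = K₀*K₃*(R₀ + R₃) = (1/4)*exp(J*β)*(exp(2*β) − 1), and η = K₀²*R₃ + K₃²*R₀ = (1/4)*(exp((J+2)*β) + exp(J*β) − 2*exp β). -/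
open Matrix Kronecker

noncomputable section

/-- The Pauli z-matrix. -/
def σz : Matrix (Fin 2) (Fin 2) ℂ := !![1, 0; 0, -1]

/-- The threefold tensor product `M₂ ⊗ M₂ ⊗ M₂`, realized via Kronecker products. -/
abbrev M3 : Type := Matrix (Fin 2 × Fin 2 × Fin 2) (Fin 2 × Fin 2 × Fin 2) ℂ

/-- `tp a b c` is the elementary tensor `a ⊗ b ⊗ c` in `M₂ ⊗ M₂ ⊗ M₂`. -/
def tp (a b c : Matrix (Fin 2) (Fin 2) ℂ) : M3 := a ⊗ₖ (b ⊗ₖ c)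

def K₀ (β : ℝ) : ℝ := (Real.exp β + 1) / 2
def K₃ (β : ℝ) : ℝ := (Real.exp β - 1) / 2
def R₀ (β J : ℝ) : ℝ := (Real.exp (J * β) + 1) / 2
def R₃ (β J : ℝ) : ℝ := (Real.exp (J * β) - 1) / 2

/-- `K¹² = K₀•(1⊗1⊗1) + K₃•(σ⊗σ⊗1)`. -/
def K12 (β : ℝ) : M3 := ((K₀ β : ℝ) : ℂ) • tp 1 1 1 + ((K₃ β : ℝ) : ℂ) • tp σz σz 1

/-- `K¹³ = K₀•(1⊗1⊗1) + K₃•(σ⊗1⊗σ)`. -/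
def K13 (β : ℝ) : M3 := ((K₀ β : ℝ) : ℂ) • tp 1 1 1 + ((K₃ β : ℝ) : ℂ) • tp σz 1 σz

/-- `L²³ = R₀•(1⊗1⊗1) + R₃•(1⊗σ⊗σ)`. -/
def L23 (β J : ℝ) : M3 := ((R₀ β J : ℝ) : ℂ) • tp 1 1 1 + ((R₃ β J : ℝ) : ℂ) • tp 1 σz σz

/-- The transfer operator `A = K¹² K¹³ L²³` of the Ising model with competing interactions. -/
def A (β J : ℝ) : M3 := K12 β * K13 β * L23 β J

def γc (β J : ℝ) : ℝ := (K₀ β) ^ 2 * R₀ β J + (K₃ β) ^ 2 * R₃ β J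
def δc (β J : ℝ) : ℝ := K₀ β * K₃ β * (R₀ β J + R₃ β J)
def ηc (β J : ℝ) : ℝ := (K₀ β) ^ 2 * R₃ β J + (K₃ β) ^ 2 * R₀ β J

/- Since `σ² = 1`, the tensors `1⊗1⊗1`, `σ⊗σ⊗1`, `σ⊗1⊗σ`, `1⊗σ⊗σ` multiply like the Klein
four-group, so multiplying out `K¹² K¹³ L²³` lands back in their span. -/

lemma σz_mul_self : σz * σz = 1 := by
  simp [σz, Matrix.one_fin_two]

lemma tp_mul (a b c d e f : Matrix (Fin 2) (Fin 2) ℂ) :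
    tp a b c * tp d e f = tp (a * d) (b * e) (c * f) := by
  simp only [tp, mul_kronecker_mul]

lemma K12_mul_K13 (β : ℝ) :
    K12 β * K13 β = ((K₀ β ^ 2 : ℝ) : ℂ) • tp 1 1 1 +
      ((K₀ β * K₃ β : ℝ) : ℂ) • (tp σz σz 1 + tp σz 1 σz) + ((K₃ β ^ 2 : ℝ) : ℂ) • tp 1 σz σz := by
  simp only [K12, K13, mul_add, add_mul, smul_mul_smul_comm, tp_mul, σz_mul_self, one_mul,
    mul_one]
  push_cast
  module

lemma A_eq_expansion (β J : ℝ) :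
    A β J = ((γc β J : ℝ) : ℂ) • tp 1 1 1 + ((δc β J : ℝ) : ℂ) • tp σz σz 1 +
      ((δc β J : ℝ) : ℂ) • tp σz 1 σz + ((ηc β J : ℝ) : ℂ) • tp 1 σz σz := by
  rw [A, K12_mul_K13]
  simp only [L23, mul_add, add_mul, smul_mul_smul_comm, tp_mul, σz_mul_self, one_mul, mul_one,
    γc, δc, ηc]
  push_cast
  module

lemma exp_add_two_mul (β J : ℝ) : Real.exp ((J + 2) * β) = Real.exp (J * β) * Real.exp β ^ 2 := by
  rw [add_mul, Real.exp_add, two_mul, Real.exp_add, sq]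

lemma γc_eq (β J : ℝ) :
    γc β J = (1 / 4) * (Real.exp ((J + 2) * β) + Real.exp (J * β) + 2 * Real.exp β) := by
  rw [γc, K₀, K₃, R₀, R₃, exp_add_two_mul]
  ring

lemma δc_eq (β J : ℝ) : δc β J = (1 / 4) * Real.exp (J * β) * (Real.exp (2 * β) - 1) := by
  rw [δc, K₀, K₃, R₀, R₃, two_mul, Real.exp_add]
  ring

lemma ηc_eq (β J : ℝ) :
    ηc β J = (1 / 4) * (Real.exp ((J + 2) * β) + Real.exp (J * β) - 2 * Real.exp β) := by
  rw [ηc, K₀, K₃, R₀, R₃, exp_add_two_mul]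
  ring

theorem transfer_operator_expansion_general (β J : ℝ) :
    A β J = ((γc β J : ℝ) : ℂ) • tp 1 1 1 + ((δc β J : ℝ) : ℂ) • tp σz σz 1 +
        ((δc β J : ℝ) : ℂ) • tp σz 1 σz + ((ηc β J : ℝ) : ℂ) • tp 1 σz σz ∧
      γc β J = (1 / 4) * (Real.exp ((J + 2) * β) + Real.exp (J * β) + 2 * Real.exp β) ∧
      δc β J = (1 / 4) * Real.exp (J * β) * (Real.exp (2 * β) - 1) ∧
      ηc β J = (1 / 4) * (Real.exp ((J + 2) * β) + Real.exp (J * β) - 2 * Real.exp β) :=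
  ⟨A_eq_expansion β J, γc_eq β J, δc_eq β J, ηc_eq β J⟩

/-- The expansion `A = γ•(1⊗1⊗1) + δ•(σ⊗σ⊗1) + δ•(σ⊗1⊗σ) + η•(1⊗σ⊗σ)`, together with
the explicit values of the coefficients `γ, δ, η`. -/
theorem transfer_operator_expansion (β J : ℝ) (hβ : 0 < β) (hJ : 0 < J) :
    A β J = ((γc β J : ℝ) : ℂ) • tp 1 1 1 + ((δc β J : ℝ) : ℂ) • tp σz σz 1 +
        ((δc β J : ℝ) : ℂ) • tp σz 1 σz + ((ηc β J : ℝ) : ℂ) • tp 1 σz σz ∧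
      γc β J = (1 / 4) * (Real.exp ((J + 2) * β) + Real.exp (J * β) + 2 * Real.exp β) ∧
      δc β J = (1 / 4) * Real.exp (J * β) * (Real.exp (2 * β) - 1) ∧
      ηc β J = (1 / 4) * (Real.exp ((J + 2) * β) + Real.exp (J * β) - 2 * Real.exp β) :=
  transfer_operator_expansion_general β J
end
end

section
/- The matrix A is diagonal: for basis indices (u₁,u₂,u₃), (v₁,v₂,v₃) ∈ (Fin 2)³, the entry A (u₁,u₂,u₃) (v₁,v₂,v₃) vanishes unless (u₁,u₂,u₃) = (v₁,v₂,v₃), and writing sᵢ = 1 − 2*(uᵢ : ℝ) ∈ {1, −1} for the spin value at site i, the diagonal entry equals exp((β/2)*(1 + s₁*s₂) + (β/2)*(1 + s₁*s₃) + ((J*β)/2)*(1 + s₂*s₃)). -/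
open Matrix Kronecker

noncomputable section

/-!
Every factor of `A` is diagonal in the spin basis, since `σ` is. On a configuration with spins
`sᵢ, sⱼ = ±1` the bond factor `(eˣ + 1)/2 + (eˣ - 1)/2 · sᵢsⱼ` is the Boltzmann weight
`exp (x/2 · (1 + sᵢsⱼ))`, which is `eˣ` for aligned and `1` for opposite spins.
-/

def spin (u : Fin 2) : ℝ := 1 - 2 * (u : ℕ)

lemma spin_eq_one_or_neg_one (u : Fin 2) : spin u = 1 ∨ spin u = -1 := by
  fin_cases u <;> norm_num [spin]

lemma spin_mul_spin_eq_one_or_neg_one (u v : Fin 2) :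
    spin u * spin v = 1 ∨ spin u * spin v = -1 := by
  rcases spin_eq_one_or_neg_one u with hu | hu <;> rcases spin_eq_one_or_neg_one v with hv | hv <;>
    simp [hu, hv]

lemma σz_eq_diagonal_spin : σz = diagonal fun u => (spin u : ℂ) := by
  ext i j
  fin_cases i <;> fin_cases j <;> norm_num [σz, spin]

lemma tp_diagonal (a b c : Fin 2 → ℂ) :
    tp (diagonal a) (diagonal b) (diagonal c) = diagonal fun p => a p.1 * (b p.2.1 * c p.2.2) := by
  simp only [tp, diagonal_kronecker_diagonal]

lemma tp_one_one_one : tp 1 1 1 = 1 := by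
  simp only [tp, one_kronecker_one]

lemma tp_σz_σz_one : tp σz σz 1 = diagonal fun p => ((spin p.1 * spin p.2.1 : ℝ) : ℂ) := by
  rw [σz_eq_diagonal_spin, ← diagonal_one, tp_diagonal]
  push_cast
  simp

lemma tp_σz_one_σz : tp σz 1 σz = diagonal fun p => ((spin p.1 * spin p.2.2 : ℝ) : ℂ) := by
  rw [σz_eq_diagonal_spin, ← diagonal_one, tp_diagonal]
  push_cast
  simp

lemma tp_one_σz_σz : tp 1 σz σz = diagonal fun p => ((spin p.2.1 * spin p.2.2 : ℝ) : ℂ) := by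
  rw [σz_eq_diagonal_spin, ← diagonal_one, tp_diagonal]
  push_cast
  simp

lemma bond_weight_eq_exp (x : ℝ) {s : ℝ} (hs : s = 1 ∨ s = -1) :
    (Real.exp x + 1) / 2 + (Real.exp x - 1) / 2 * s = Real.exp (x / 2 * (1 + s)) := by
  rcases hs with rfl | rfl <;> norm_num <;> ring

lemma bond_operator_eq_diagonal {ι : Type*} [DecidableEq ι] (x : ℝ) (s : ι → ℝ)
    (hs : ∀ i, s i = 1 ∨ s i = -1) :
    (((Real.exp x + 1) / 2 : ℝ) : ℂ) • (1 : Matrix ι ι ℂ) +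
        (((Real.exp x - 1) / 2 : ℝ) : ℂ) • diagonal (fun i => (s i : ℂ)) =
      diagonal fun i => (Real.exp (x / 2 * (1 + s i)) : ℂ) := by
  rw [← diagonal_one, ← diagonal_smul, ← diagonal_smul, diagonal_add]
  congr 1
  funext i
  rw [← bond_weight_eq_exp x (hs i)]
  simp only [Pi.smul_apply, smul_eq_mul]
  push_cast
  ring

lemma K12_eq_diagonal (β : ℝ) :
    K12 β = diagonal fun p => (Real.exp (β / 2 * (1 + spin p.1 * spin p.2.1)) : ℂ) := by
  rw [K12, K₀, K₃, tp_one_one_one, tp_σz_σz_one,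
    bond_operator_eq_diagonal _ _ fun p => spin_mul_spin_eq_one_or_neg_one _ _]

lemma K13_eq_diagonal (β : ℝ) :
    K13 β = diagonal fun p => (Real.exp (β / 2 * (1 + spin p.1 * spin p.2.2)) : ℂ) := by
  rw [K13, K₀, K₃, tp_one_one_one, tp_σz_one_σz,
    bond_operator_eq_diagonal _ _ fun p => spin_mul_spin_eq_one_or_neg_one _ _]

lemma L23_eq_diagonal (β J : ℝ) :
    L23 β J = diagonal fun p => (Real.exp (J * β / 2 * (1 + spin p.2.1 * spin p.2.2)) : ℂ) := by
  rw [L23, R₀, R₃, tp_one_one_one, tp_one_σz_σz,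
    bond_operator_eq_diagonal _ _ fun p => spin_mul_spin_eq_one_or_neg_one _ _]

lemma A_eq_diagonal (β J : ℝ) :
    A β J = diagonal fun p => (Real.exp (β / 2 * (1 + spin p.1 * spin p.2.1) +
      β / 2 * (1 + spin p.1 * spin p.2.2) + J * β / 2 * (1 + spin p.2.1 * spin p.2.2)) : ℂ) := by
  rw [A, K12_eq_diagonal, K13_eq_diagonal, L23_eq_diagonal, diagonal_mul_diagonal,
    diagonal_mul_diagonal]
  simp only [Real.exp_add, Complex.ofReal_mul]

theorem transfer_operator_diagonal_general (β J : ℝ)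
    (u v : Fin 2 × Fin 2 × Fin 2) :
    (u ≠ v → A β J u v = 0) ∧
      A β J u u =
        Complex.exp
          (((β / 2) * (1 + (1 - 2 * ((u.1 : ℕ) : ℝ)) * (1 - 2 * ((u.2.1 : ℕ) : ℝ))) +
              (β / 2) * (1 + (1 - 2 * ((u.1 : ℕ) : ℝ)) * (1 - 2 * ((u.2.2 : ℕ) : ℝ))) +
              ((J * β) / 2) * (1 + (1 - 2 * ((u.2.1 : ℕ) : ℝ)) * (1 - 2 * ((u.2.2 : ℕ) : ℝ))) :
            ℝ) : ℂ) := by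
  rw [A_eq_diagonal]
  exact ⟨fun huv => diagonal_apply_ne _ huv, by rw [diagonal_apply_eq, Complex.ofReal_exp]; rfl⟩

/-- The matrix `A` is diagonal, with diagonal entry at spin configuration `(s₁,s₂,s₃)`
equal to `exp((β/2)(1+s₁s₂) + (β/2)(1+s₁s₃) + (Jβ/2)(1+s₂s₃))`, where `sᵢ = 1 - 2 uᵢ`. -/
theorem transfer_operator_diagonal (β J : ℝ) (hβ : 0 < β) (hJ : 0 < J)
    (u v : Fin 2 × Fin 2 × Fin 2) :
    (u ≠ v → A β J u v = 0) ∧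
      A β J u u =
        Complex.exp
          (((β / 2) * (1 + (1 - 2 * ((u.1 : ℕ) : ℝ)) * (1 - 2 * ((u.2.1 : ℕ) : ℝ))) +
              (β / 2) * (1 + (1 - 2 * ((u.1 : ℕ) : ℝ)) * (1 - 2 * ((u.2.2 : ℕ) : ℝ))) +
              ((J * β) / 2) * (1 + (1 - 2 * ((u.2.1 : ℕ) : ℝ)) * (1 - 2 * ((u.2.2 : ℕ) : ℝ))) :
            ℝ) : ℂ) :=
  transfer_operator_diagonal_general β J u v
end
end

section
/- Let V' be a nonempty set of vertices of the tree G such that the subgraph induced by G on V' is connected, and let o' ∈ V' be the unique vertex with d o o' ≤ d o x for all x ∈ V'. Then for every x ∈ V' one has d o x = d o o' + d o' x; that is, o' lies on the unique path in G joining the root o to any vertex of V'. -/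
/-! A geodesic from `o` to `o'` followed by a path from `o'` to `x` inside `V'` is again a path:
a common vertex `v ≠ o'` would lie in `V'` and on the geodesic to `o'`, hence strictly closer to `o`
than `o'`. In a tree every path is a geodesic, so the two lengths add up to `d o x`. -/

open SimpleGraph Walk

namespace SimpleGraph

variable {V : Type*} {G : SimpleGraph V} {u v w : V}

lemma IsAcyclic.length_eq_dist_of_isPath (hG : G.IsAcyclic) {p : G.Walk u v} (hp : p.IsPath) :
    p.length = G.dist u v := by
  obtain ⟨q, hq, hqd⟩ := p.reachable.exists_path_of_dist
  have hpq : p = q := congrArg Subtype.val ((hG.subsingleton_path u v).elim ⟨p, hp⟩ ⟨q, hq⟩)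
  rw [hpq, hqd]

lemma IsAcyclic.dist_add_dist_of_mem_support [DecidableEq V] (hG : G.IsAcyclic) {p : G.Walk u v}
    (hp : p.IsPath) (hw : w ∈ p.support) : G.dist u w + G.dist w v = G.dist u v := by
  rw [← hG.length_eq_dist_of_isPath (hp.takeUntil hw),
    ← hG.length_eq_dist_of_isPath (hp.dropUntil hw), ← hG.length_eq_dist_of_isPath hp,
    ← length_append, take_spec]

lemma Walk.IsPath.append {p : G.Walk u v} {q : G.Walk v w} (hp : p.IsPath)
    (hq : q.IsPath) (hpq : ∀ x ∈ p.support, x ∈ q.support → x = v) : (p.append q).IsPath := by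
  rw [isPath_def, support_append, List.nodup_append]
  refine ⟨hp.support_nodup, hq.support_nodup.sublist q.support.tail_sublist, ?_⟩
  rintro x hxp y hyq rfl
  have hx : x = v := hpq x hxp (List.mem_of_mem_tail hyq)
  subst hx
  have hnodup := hq.support_nodup
  rw [← cons_tail_support, List.nodup_cons] at hnodup
  exact hnodup.1 hyq

lemma exists_isPath_support_subset_of_induce_preconnected {s : Set V}
    (hs : (G.induce s).Preconnected) (hu : u ∈ s) (hv : v ∈ s) :
    ∃ p : G.Walk u v, p.IsPath ∧ ∀ x ∈ p.support, x ∈ s := by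
  obtain ⟨p, hp, -⟩ := (hs ⟨u, hu⟩ ⟨v, hv⟩).exists_path_of_dist
  have hsub : ∀ x ∈ (p.map (Embedding.induce (G := G) s).toHom).support, x ∈ s := by
    intro x hx
    rw [Walk.support_map, List.mem_map] at hx
    obtain ⟨y, -, rfl⟩ := hx
    exact y.2
  exact ⟨_, hp.map Subtype.val_injective, hsub⟩

end SimpleGraph

theorem subtree_root_on_geodesics_general {V : Type*} (G : SimpleGraph V) (hG : G.IsTree) (o : V)
    (V' : Set V) (hconn : (G.induce V').Connected)
    (o' : V) (ho' : o' ∈ V') (hmin : ∀ x ∈ V', G.dist o o' ≤ G.dist o x) :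
    ∀ x ∈ V', G.dist o x = G.dist o o' + G.dist o' x := by
  classical
  intro x hx
  obtain ⟨q, hq, -⟩ := (hG.connected o o').exists_path_of_dist
  obtain ⟨p, hp, hpV'⟩ :=
    exists_isPath_support_subset_of_induce_preconnected hconn.preconnected ho' hx
  have hqp : (q.append p).IsPath := hq.append hp fun v hvq hvp => by
    have hsplit := hG.isAcyclic.dist_add_dist_of_mem_support hq hvq
    have hle := hmin v (hpV' v hvp)
    exact (hG.connected v o').dist_eq_zero_iff.mp (by omega)
  rw [← hG.isAcyclic.length_eq_dist_of_isPath hqp, length_append,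
    hG.isAcyclic.length_eq_dist_of_isPath hq, hG.isAcyclic.length_eq_dist_of_isPath hp]

/-- If `o'` is the root of a nonempty connected set of vertices `V'` of a tree (the unique
vertex of `V'` closest to the root `o`), then `o'` lies on the unique path from `o` to any
vertex of `V'`: `d o x = d o o' + d o' x` for all `x ∈ V'`. -/
theorem subtree_root_on_geodesics {V : Type*} (G : SimpleGraph V) (hG : G.IsTree) (o : V)
    (V' : Set V) (hne : V'.Nonempty) (hconn : (G.induce V').Connected)
    (o' : V) (ho' : o' ∈ V') (hmin : ∀ x ∈ V', G.dist o o' ≤ G.dist o x) :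
    ∀ x ∈ V', G.dist o x = G.dist o o' + G.dist o' x :=
  subtree_root_on_geodesics_general G hG o V' hconn o' ho' hmin
end
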